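/- arXiv:1707.08690 — 3 statements merged into one kernel-verified Lean document; each statement's English description precedes it below -/
import Mathlib

section
/- Let G be a split graph with split partitions (C, I) and (C', I') that are distinct. Then the sizes of C and C' differ by at most 1. -/
/-- `s` is an independent set of `G`. -/
def SimpleGraph.IsIndepSetOfFile {V : Type} (G : SimpleGraph V) (s : Set V) : Prop :=
  s.Pairwise fun u v => ¬ G.Adj u v

/-- `(C, I)` is a split partition of `G`: `C` is a clique, `I` is an independent
set, and they partition the vertex set. -/
def SimpleGraph.IsSplitPartition {V : Type} (G : SimpleGraph V) (C I : Set V) : Prop :=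
  C ∪ I = Set.univ ∧ Disjoint C I ∧ G.IsClique C ∧ G.IsIndepSetOfFile I

/-! A vertex of `C` outside `C'` lies in the independent set `I'`, and two such vertices would
be adjacent in `C`; so the cliques of two split partitions differ by at most one vertex each
way, and their sizes by at most one. -/

namespace Set

variable {α : Type*} {s t : Set α}

theorem Subsingleton.ncard_le_one (hs : s.Subsingleton) : s.ncard ≤ 1 :=
  have : Finite s := hs.finite
  ncard_le_one_iff_subsingleton.mpr hs

theorem ncard_le_ncard_add_one_of_subsingleton_sdiff (hst : (s \ t).Subsingleton)
    (hts : (t \ s).Subsingleton) : s.ncard ≤ t.ncard + 1 := by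
  by_cases ht : t.Finite
  · calc s.ncard ≤ (s \ t).ncard + t.ncard := ncard_le_ncard_sdiff_add_ncard s t ht
      _ ≤ t.ncard + 1 := by have := hst.ncard_le_one; omega
  · have hs : s.Infinite := fun hs =>
      ht ((hs.union hts.finite).subset (by rw [union_sdiff_self]; exact subset_union_right))
    simp [hs.ncard]

end Set

namespace SimpleGraph

variable {V : Type} {G : SimpleGraph V}

theorem IsClique.subsingleton_inter {s t : Set V} (hs : G.IsClique s)
    (ht : G.IsIndepSetOfFile t) : (s ∩ t).Subsingleton := by
  intro u hu v hv
  by_contra huv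
  exact ht hu.2 hv.2 huv (hs hu.1 hv.1 huv)

theorem IsSplitPartition.subsingleton_sdiff {C I C' I' : Set V} (h : G.IsSplitPartition C I)
    (h' : G.IsSplitPartition C' I') : (C \ C').Subsingleton := by
  refine (h.2.2.1.subsingleton_inter h'.2.2.2).anti fun v hv => ⟨hv.1, ?_⟩
  have hv' : v ∈ C' ∪ I' := h'.1 ▸ Set.mem_univ v
  exact hv'.resolve_left hv.2

end SimpleGraph

theorem stmt2_general {V : Type} (G : SimpleGraph V) (C I C' I' : Set V)
    (h : G.IsSplitPartition C I) (h' : G.IsSplitPartition C' I') :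
    C.ncard ≤ C'.ncard + 1 ∧ C'.ncard ≤ C.ncard + 1 :=
  have hCC' := h.subsingleton_sdiff h'
  have hC'C := h'.subsingleton_sdiff h
  ⟨Set.ncard_le_ncard_add_one_of_subsingleton_sdiff hCC' hC'C,
    Set.ncard_le_ncard_add_one_of_subsingleton_sdiff hC'C hCC'⟩

theorem stmt2 {V : Type} [Fintype V] (G : SimpleGraph V) (C I C' I' : Set V)
    (h : G.IsSplitPartition C I) (h' : G.IsSplitPartition C' I')
    (hne : (C, I) ≠ (C', I')) :
    C.ncard ≤ C'.ncard + 1 ∧ C'.ncard ≤ C.ncard + 1 :=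
  stmt2_general G C I C' I' h h'
end

section
/- Let G be a bipartite graph with bipartition (C, I), and let G' be obtained from G by adding all edges among C (making C a clique). Then for every vertex subset U, the induced subgraph G[U] contains an induced 2K₂ if and only if G'[U] contains an induced P₄. -/
/-- `2K₂`: the disjoint union of two edges, on 4 vertices. -/
def twoK2 : SimpleGraph (Fin 4) :=
  SimpleGraph.fromEdgeSet {s(0, 1), s(2, 3)}

/-- The graph obtained from `G` by adding all edges among `C`. -/
def addCliqueEdges {V : Type} (G : SimpleGraph V) (C : Set V) : SimpleGraph V where
  Adj u v := G.Adj u v ∨ (u ≠ v ∧ u ∈ C ∧ v ∈ C)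
  symm := by constructor; intro u v h; rcases h with h | ⟨h, h1, h2⟩
             · exact Or.inl h.symm
             · exact Or.inr ⟨h.symm, h2, h1⟩
  loopless := by constructor; intro v h; rcases h with h | ⟨h, _⟩ <;> simp_all

/-!
In `G'`, a vertex outside `C` keeps only its `G`-neighbours, all of which lie in `C`. Hence the
middle vertex of an induced `P₃` of `G'` lies in `C` (otherwise both ends lie in `C` and are
adjacent), so an induced `P₄` of `G'` has its two inner vertices in `C` and its two ends outside;
its end edges are then edges of `G`, and they form an induced `2K₂` of `G`. Conversely, orienting
the two edges `ab`, `cd` of an induced `2K₂` so that `a, c ∈ C`, the path `b a c d` is an induced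
`P₄` of `G'`.
-/

open SimpleGraph

section Embedding

variable {W : Type*} {H : SimpleGraph W}

theorem nonempty_twoK2_embedding_iff :
    Nonempty (twoK2 ↪g H) ↔ ∃ a b c d, H.Adj a b ∧ H.Adj c d ∧
      ¬H.Adj a c ∧ ¬H.Adj a d ∧ ¬H.Adj b c ∧ ¬H.Adj b d := by
  constructor
  · rintro ⟨e⟩
    have adj (i j : Fin 4) : H.Adj (e i) (e j) ↔ twoK2.Adj i j := e.map_rel_iff
    refine ⟨e 0, e 1, e 2, e 3, ?_, ?_, ?_, ?_, ?_, ?_⟩ <;> simp only [adj] <;> simp [twoK2]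
  · rintro ⟨a, b, c, d, hab, hcd, hac, had, hbc, hbd⟩
    refine ⟨⟨⟨![a, b, c, d], ?_⟩, ?_⟩⟩
    · intro i j hij
      fin_cases i <;> fin_cases j <;> simp_all [H.adj_comm]
    · intro i j
      change H.Adj (![a, b, c, d] i) (![a, b, c, d] j) ↔ _
      fin_cases i <;> fin_cases j <;> simp_all [twoK2, H.adj_comm]

theorem nonempty_pathGraph_four_embedding_iff :
    Nonempty (pathGraph 4 ↪g H) ↔ ∃ a b c d, H.Adj a b ∧ H.Adj b c ∧ H.Adj c d ∧
      ¬H.Adj a c ∧ ¬H.Adj a d ∧ ¬H.Adj b d := by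
  constructor
  · rintro ⟨e⟩
    have adj (i j : Fin 4) : H.Adj (e i) (e j) ↔ (pathGraph 4).Adj i j := e.map_rel_iff
    refine ⟨e 0, e 1, e 2, e 3, ?_, ?_, ?_, ?_, ?_, ?_⟩ <;> simp only [adj] <;> simp [pathGraph_adj]
  · rintro ⟨a, b, c, d, hab, hbc, hcd, hac, had, hbd⟩
    refine ⟨⟨⟨![a, b, c, d], ?_⟩, ?_⟩⟩
    · intro i j hij
      fin_cases i <;> fin_cases j <;> simp_all [H.adj_comm]
    · intro i j
      change H.Adj (![a, b, c, d] i) (![a, b, c, d] j) ↔ _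
      fin_cases i <;> fin_cases j <;> simp_all [pathGraph_adj, H.adj_comm]

end Embedding

section AddCliqueEdges

variable {V : Type} {G : SimpleGraph V} {C : Set V} {a b c d : V}

theorem addCliqueEdges_adj :
    (addCliqueEdges G C).Adj a b ↔ G.Adj a b ∨ (a ≠ b ∧ a ∈ C ∧ b ∈ C) := Iff.rfl

theorem adj_of_addCliqueEdges_adj (h : (addCliqueEdges G C).Adj a b) (hab : a ∉ C ∨ b ∉ C) :
    G.Adj a b :=
  h.resolve_right fun ⟨_, ha, hb⟩ => hab.elim (· ha) (· hb)

theorem induce_addCliqueEdges (G : SimpleGraph V) (C U : Set V) :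
    (addCliqueEdges G C).induce U = addCliqueEdges (G.induce U) (Subtype.val ⁻¹' C) := by
  ext u v
  simp [addCliqueEdges_adj, Subtype.val_inj]

theorem nonempty_pathGraph_four_embedding_addCliqueEdges (ha : a ∈ C) (hb : b ∉ C) (hc : c ∈ C)
    (hd : d ∉ C) (hab : G.Adj a b) (hcd : G.Adj c d) (had : ¬G.Adj a d) (hbc : ¬G.Adj b c)
    (hbd : ¬G.Adj b d) : Nonempty (pathGraph 4 ↪g addCliqueEdges G C) := by
  refine nonempty_pathGraph_four_embedding_iff.2 ⟨b, a, c, d, Or.inl hab.symm,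
    Or.inr ⟨fun h => had (h ▸ hcd), ha, hc⟩, Or.inl hcd, ?_, ?_, ?_⟩ <;>
    rw [addCliqueEdges_adj] <;> tauto

theorem mem_of_addCliqueEdges_adj_adj (hG : ∀ u v, G.Adj u v → (u ∈ C ↔ v ∉ C))
    (hab : (addCliqueEdges G C).Adj a b)
    (hbc : (addCliqueEdges G C).Adj b c) (hac : ¬(addCliqueEdges G C).Adj a c) (hne : a ≠ c) :
    b ∈ C := by
  by_contra hb
  have ha : a ∈ C := (hG a b (adj_of_addCliqueEdges_adj hab (.inr hb))).2 hb
  have hc : c ∈ C := (hG c b (adj_of_addCliqueEdges_adj hbc.symm (.inr hb))).2 hb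
  exact hac (Or.inr ⟨hne, ha, hc⟩)

theorem nonempty_pathGraph_four_embedding_addCliqueEdges_of_twoK2 (hG : ∀ u v, G.Adj u v → (u ∈ C ↔ v ∉ C))
    (h : Nonempty (twoK2 ↪g G)) :
    Nonempty (pathGraph 4 ↪g addCliqueEdges G C) := by
  obtain ⟨a, b, c, d, hab, hcd, hac, had, hbc, hbd⟩ := nonempty_twoK2_embedding_iff.1 h
  by_cases ha : a ∈ C <;> by_cases hc : c ∈ C
  · exact nonempty_pathGraph_four_embedding_addCliqueEdges ha ((hG a b hab).1 ha) hc
      ((hG c d hcd).1 hc) hab hcd had hbc hbd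
  · exact nonempty_pathGraph_four_embedding_addCliqueEdges ha ((hG a b hab).1 ha)
      ((hG d c hcd.symm).2 hc) hc hab hcd.symm hac hbd hbc
  · exact nonempty_pathGraph_four_embedding_addCliqueEdges ((hG b a hab.symm).2 ha) ha hc
      ((hG c d hcd).1 hc) hab.symm hcd hbd hac had
  · exact nonempty_pathGraph_four_embedding_addCliqueEdges ((hG b a hab.symm).2 ha) ha
      ((hG d c hcd.symm).2 hc) hc hab.symm hcd.symm hbc had hac

theorem nonempty_twoK2_embedding_of_pathGraph_four_addCliqueEdges (hG : ∀ u v, G.Adj u v → (u ∈ C ↔ v ∉ C))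
    (h : Nonempty (pathGraph 4 ↪g addCliqueEdges G C)) : Nonempty (twoK2 ↪g G) := by
  obtain ⟨a, b, c, d, hab, hbc, hcd, hac, had, hbd⟩ := nonempty_pathGraph_four_embedding_iff.1 h
  have hne_ac : a ≠ c := fun h => had (h ▸ hcd)
  have hne_bd : b ≠ d := fun h => had (h ▸ hab)
  have hb : b ∈ C := mem_of_addCliqueEdges_adj_adj hG hab hbc hac hne_ac
  have hc : c ∈ C := mem_of_addCliqueEdges_adj_adj hG hbc hcd hbd hne_bd
  have ha : a ∉ C := fun ha => hac (Or.inr ⟨hne_ac, ha, hc⟩)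
  have hd : d ∉ C := fun hd => hbd (Or.inr ⟨hne_bd, hb, hd⟩)
  exact nonempty_twoK2_embedding_iff.2 ⟨a, b, c, d, adj_of_addCliqueEdges_adj hab (.inl ha),
    adj_of_addCliqueEdges_adj hcd (.inr hd), (hac <| .inl ·), (had <| .inl ·),
    fun h => (hG b c h).1 hb hc, (hbd <| .inl ·)⟩

theorem nonempty_twoK2_embedding_iff_pathGraph_four_addCliqueEdges
    (hG : ∀ u v, G.Adj u v → (u ∈ C ↔ v ∉ C)) :
    Nonempty (twoK2 ↪g G) ↔ Nonempty (pathGraph 4 ↪g addCliqueEdges G C) :=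
  ⟨nonempty_pathGraph_four_embedding_addCliqueEdges_of_twoK2 hG,
    nonempty_twoK2_embedding_of_pathGraph_four_addCliqueEdges hG⟩

end AddCliqueEdges

theorem stmt13_general {V : Type} (G : SimpleGraph V) (C I : Set V)
    (hdisj : Disjoint C I)
    (hbip : ∀ u v : V, G.Adj u v → ((u ∈ C ∧ v ∈ I) ∨ (u ∈ I ∧ v ∈ C)))
    (U : Set V) :
    Nonempty (twoK2 ↪g G.induce U) ↔
      Nonempty (SimpleGraph.pathGraph 4 ↪g (addCliqueEdges G C).induce U) := by
  have hcross (u v : U) (h : (G.induce U).Adj u v) : (u.1 ∈ C ↔ v.1 ∉ C) := by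
    rcases hbip u v h with ⟨hu, hv⟩ | ⟨hu, hv⟩
    · exact iff_of_true hu (hdisj.notMem_of_mem_right hv)
    · exact iff_of_false (hdisj.notMem_of_mem_right hu) (not_not.2 hv)
  rw [induce_addCliqueEdges]
  exact nonempty_twoK2_embedding_iff_pathGraph_four_addCliqueEdges hcross

theorem stmt13 {V : Type} [Fintype V] (G : SimpleGraph V) (C I : Set V)
    (hpart : C ∪ I = Set.univ) (hdisj : Disjoint C I)
    (hbip : ∀ u v : V, G.Adj u v → ((u ∈ C ∧ v ∈ I) ∨ (u ∈ I ∧ v ∈ C)))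
    (U : Set V) :
    Nonempty (twoK2 ↪g G.induce U) ↔
      Nonempty (SimpleGraph.pathGraph 4 ↪g (addCliqueEdges G C).induce U) :=
  stmt13_general G C I hdisj hbip U
end

section
/- A finite chordal graph G contains no clique on p vertices (is K_p-free) if and only if G is properly colorable with p − 1 colors. -/
/-!
Dirac's argument. Any two nonadjacent vertices `a`, `b` of a chordal graph are separated by a
clique: let `A` be the component of `a` in `G - N[b]` and `S` the set of neighbours of `A` outside
`A`, all of which are adjacent to `b`. Two nonadjacent `x, y ∈ S` would be joined by chordless
paths through `A` and through the component `B` of `b` in `G - S`, and these close up into a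
chordless cycle of length at least 4. Induction applied to `A ∪ S` and `B ∪ S` then gives every
non-complete induced subgraph two nonadjacent simplicial vertices. A simplicial vertex of a
`K_p`-free graph has at most `p - 2` neighbours, so deleting simplicial vertices one at a time
yields a greedy colouring with `p - 1` colours; the converse holds in every graph.
-/

/-- `G` is chordal: it has no induced cycle of length at least 4. -/
def SimpleGraph.IsChordal {V : Type} (G : SimpleGraph V) : Prop :=
  ∀ n : ℕ, 4 ≤ n → ¬ Nonempty (SimpleGraph.cycleGraph n ↪g G)

namespace SimpleGraph

theorem cycleGraph_adj_iff_val {n : ℕ} (hn : 2 ≤ n) {a b : Fin n} :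
    (cycleGraph n).Adj a b ↔ a.val + 1 = b.val ∨ b.val + 1 = a.val ∨
      (a.val = 0 ∧ b.val + 1 = n) ∨ (b.val = 0 ∧ a.val + 1 = n) := by
  obtain ⟨n, rfl⟩ : ∃ m, n = m + 2 := ⟨n - 2, by omega⟩
  rw [cycleGraph_adj']
  rcases lt_trichotomy a b with h | rfl | h
  · rw [Fin.coe_sub_iff_lt.2 h, Fin.sub_val_of_le h.le]; omega
  · simp only [sub_self, Fin.val_zero]; omega
  · rw [Fin.coe_sub_iff_lt.2 h, Fin.sub_val_of_le h.le]; omega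

section

variable {V : Type*} {G : SimpleGraph V}

namespace Walk

theorem IsCycle.getVert_inj {v : V} {c : G.Walk v v} (hc : c.IsCycle) {i j : ℕ}
    (hi : i < c.length) (hj : j < c.length) : c.getVert i = c.getVert j ↔ i = j :=
  ⟨fun h => hc.getVert_injOn' (by simp; omega) (by simp; omega) h, fun h => h ▸ rfl⟩

theorem IsCycle.adj_getVert_iff_of_isChordless {v : V} {c : G.Walk v v} (hc : c.IsCycle)
    (hch : c.IsChordless) {i j : ℕ} (hi : i < c.length) (hj : j < c.length) :
    G.Adj (c.getVert i) (c.getVert j) ↔ i + 1 = j ∨ j + 1 = i ∨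
      (i = 0 ∧ j + 1 = c.length) ∨ (j = 0 ∧ i + 1 = c.length) := by
  have hwrap : c.getVert c.length = c.getVert 0 := by simp
  constructor
  · intro hadj
    obtain ⟨k, hk, hkij⟩ := (mk_mem_edges_iff_exists c).1
      (hch.mem_edges (c.getVert_mem_support i) (c.getVert_mem_support j) hadj)
    have hsucc : ∀ l < c.length, c.getVert (k + 1) = c.getVert l →
        k + 1 = l ∨ (l = 0 ∧ k + 1 = c.length) := by
      intro l hl h
      rcases Nat.lt_or_ge (k + 1) c.length with hk' | hk'
      · exact Or.inl ((hc.getVert_inj hk' hl).1 h)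
      · rw [show k + 1 = c.length by omega, hwrap, hc.getVert_inj (by omega) hl] at h
        omega
    rcases Sym2.eq_iff.1 hkij with ⟨h1, h2⟩ | ⟨h1, h2⟩
    · rw [hc.getVert_inj hk hi] at h1
      have := hsucc j hj h2
      omega
    · rw [hc.getVert_inj hk hj] at h1
      have := hsucc i hi h2
      omega
  · rintro (rfl | rfl | ⟨rfl, h⟩ | ⟨rfl, h⟩)
    · exact c.adj_getVert_succ hi
    · exact (c.adj_getVert_succ hj).symm
    · rw [← hwrap, ← h]; exact (c.adj_getVert_succ hj).symm
    · rw [← hwrap, ← h]; exact c.adj_getVert_succ hi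

theorem isChordless_of_length_eq_dist {u v : V} {p : G.Walk u v} (hp : p.length = G.dist u v) :
    p.IsChordless := by
  have hconsec : ∀ i j, i < j → j ≤ p.length →
      G.Adj (p.getVert i) (p.getVert j) → j = i + 1 := by
    intro i j hij hj hadj
    by_contra hne
    have hshort := dist_le ((p.take i).append (cons hadj (p.drop j)))
    rw [length_append, length_cons, take_length, drop_length] at hshort
    omega
  rw [isChordless_iff_forall_mem_edges]
  intro a b ha hb hab
  obtain ⟨i, rfl, hi⟩ := mem_support_iff_exists_getVert.1 ha
  obtain ⟨j, rfl, hj⟩ := mem_support_iff_exists_getVert.1 hb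
  rcases lt_trichotomy i j with hij | rfl | hij
  · obtain rfl := hconsec i j hij hj hab
    exact (mk_mem_edges_iff_exists p).2 ⟨i, by omega, rfl⟩
  · exact absurd hab G.irrefl
  · obtain rfl := hconsec j i hij hi hab.symm
    exact (mk_mem_edges_iff_exists p).2 ⟨j, by omega, Sym2.eq_swap⟩

theorem IsChordless.map {W : Type*} {G' : SimpleGraph W} (f : G ↪g G') {u v : V}
    {p : G.Walk u v} (hp : p.IsChordless) : (p.map f.toHom).IsChordless := by
  rw [isChordless_iff_forall_mem_edges] at hp ⊢
  intro a b ha hb hab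
  rw [support_map, List.mem_map] at ha hb
  obtain ⟨a, ha, rfl⟩ := ha
  obtain ⟨b, hb, rfl⟩ := hb
  rw [edges_map]
  exact List.mem_map_of_mem (f := Sym2.map f) (hp ha hb (f.map_adj_iff.1 hab))

theorem two_le_length_of_not_adj {u v : V} (p : G.Walk u v) (hne : u ≠ v)
    (hnadj : ¬ G.Adj u v) : 2 ≤ p.length := by
  rcases p with _ | ⟨h, _ | ⟨_, _⟩⟩
  · exact absurd rfl hne
  · exact absurd h hnadj
  · simp

end Walk

def ReachableIn (G : SimpleGraph V) (W : Set V) (u v : V) : Prop :=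
  ∃ p : G.Walk u v, ∀ z ∈ p.support, z ∈ W

/-- The component of `u` in `G[W]`; empty when `u ∉ W`. -/
def componentIn (G : SimpleGraph V) (W : Set V) (u : V) : Set V :=
  {v | G.ReachableIn W u v}

namespace ReachableIn

variable {W W' : Set V} {u v w : V}

theorem refl (hu : u ∈ W) : G.ReachableIn W u u :=
  ⟨.nil, by simpa⟩

theorem mem_right (h : G.ReachableIn W u v) : v ∈ W :=
  h.elim fun p hp => hp v p.end_mem_support

theorem symm (h : G.ReachableIn W u v) : G.ReachableIn W v u :=
  h.elim fun p hp => ⟨p.reverse, fun z hz => hp z (by simpa using hz)⟩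

theorem trans (h : G.ReachableIn W u v) (h' : G.ReachableIn W v w) : G.ReachableIn W u w := by
  obtain ⟨p, hp⟩ := h
  obtain ⟨q, hq⟩ := h'
  refine ⟨p.append q, fun z hz => ?_⟩
  rcases (Walk.mem_support_append_iff _ _).1 hz with hz | hz
  exacts [hp z hz, hq z hz]

theorem concat (h : G.ReachableIn W u v) (hvw : G.Adj v w) (hw : w ∈ W) :
    G.ReachableIn W u w :=
  h.trans ⟨hvw.toWalk, by simpa [hvw.ne] using ⟨h.mem_right, hw⟩⟩

theorem mono (hWW' : W ⊆ W') (h : G.ReachableIn W u v) : G.ReachableIn W' u v :=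
  h.elim fun p hp => ⟨p, fun z hz => hWW' (hp z hz)⟩

theorem mem_of_forall_adj {C : Set V} (hC : ∀ a ∈ C, ∀ b ∈ W, G.Adj a b → b ∈ C)
    (h : G.ReachableIn W u v) (hu : u ∈ C) : v ∈ C := by
  obtain ⟨p, hp⟩ := h
  induction p with
  | nil => exact hu
  | cons hadj q ih =>
    simp only [Walk.support_cons, List.mem_cons, forall_eq_or_imp] at hp
    exact ih (hC _ hu _ (hp.2 _ q.start_mem_support) hadj) hp.2

theorem reachableIn_componentIn (h : G.ReachableIn W u v) :
    G.ReachableIn (G.componentIn W u) u v := by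
  classical
  obtain ⟨p, hp⟩ := h
  exact ⟨p, fun z hz =>
    ⟨p.takeUntil z hz, fun y hy => hp y (p.support_takeUntil_subset_support hz hy)⟩⟩

end ReachableIn

theorem ReachableIn.insert_insert {C : Set V} {x y u v : V} (hxu : G.Adj x u)
    (h : G.ReachableIn C u v) (hvy : G.Adj v y) : G.ReachableIn (insert x (insert y C)) x y :=
  (((h.mono (by intro; simp_all)).concat hvy (by simp)).symm.concat hxu.symm (by simp)).symm

theorem componentIn_subset {W : Set V} {u : V} : G.componentIn W u ⊆ W :=
  fun _ h => h.mem_right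

theorem reachableIn_componentIn_of_mem {W : Set V} {u a b : V} (ha : a ∈ G.componentIn W u)
    (hb : b ∈ G.componentIn W u) : G.ReachableIn (G.componentIn W u) a b :=
  ha.reachableIn_componentIn.symm.trans hb.reachableIn_componentIn

theorem ReachableIn.exists_isPath_isChordless {W : Set V} {u v : V} (h : G.ReachableIn W u v) :
    ∃ p : G.Walk u v, p.IsPath ∧ p.IsChordless ∧ ∀ z ∈ p.support, z ∈ W := by
  obtain ⟨p, hp⟩ := h
  obtain ⟨q, hq, hlen⟩ := (p.induce W hp).reachable.exists_path_of_dist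
  have hW : ∀ z ∈ (q.map (Embedding.induce W).toHom).support, z ∈ W := by
    intro z hz
    rw [Walk.support_map, List.mem_map] at hz
    obtain ⟨z, -, rfl⟩ := hz
    exact z.2
  exact ⟨q.map (Embedding.induce W).toHom, hq.map Subtype.val_injective,
    (Walk.isChordless_of_length_eq_dist hlen).map _, hW⟩

def IsSimplicialIn (G : SimpleGraph V) (s : Set V) (v : V) : Prop :=
  G.IsClique (G.neighborSet v ∩ s)

theorem exists_isSimplicialIn_of_forall_ssubset {s : Finset V}
    (ih : ∀ t ⊂ s, ¬ G.IsClique (t : Set V) → ∃ u ∈ t, ∃ w ∈ t,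
      u ≠ w ∧ ¬ G.Adj u w ∧ G.IsSimplicialIn t u ∧ G.IsSimplicialIn t w)
    {C S : Set V} (hS : G.IsClique S) (hC : ∀ u ∈ C, ∀ w ∈ s, G.Adj u w → w ∈ C ∨ w ∈ S)
    {c z : V} (hc : c ∈ C) (hcs : c ∈ s) (hz : z ∈ s) (hzC : z ∉ C) (hzS : z ∉ S) :
    ∃ u ∈ s, u ∈ C ∧ G.IsSimplicialIn s u := by
  classical
  set t := s.filter (fun v => v ∈ C ∨ v ∈ S)
  have hts : t ⊂ s := Finset.filter_ssubset.2 ⟨z, hz, by simp [hzC, hzS]⟩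
  have hnbr : ∀ u ∈ C, G.neighborSet u ∩ s ⊆ G.neighborSet u ∩ t :=
    fun u hu w ⟨hw, hws⟩ => ⟨hw, Finset.mem_filter.2 ⟨hws, hC u hu w hws hw⟩⟩
  by_cases ht : G.IsClique (t : Set V)
  · exact ⟨c, hcs, hc, ht.subset ((hnbr c hc).trans Set.inter_subset_right)⟩
  obtain ⟨u, hu, w, hw, huw, hnadj, hsu, hsw⟩ := ih t hts ht
  rcases (Finset.mem_filter.1 hu).2 with huC | huS
  · exact ⟨u, (Finset.mem_filter.1 hu).1, huC, hsu.subset (hnbr u huC)⟩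
  rcases (Finset.mem_filter.1 hw).2 with hwC | hwS
  · exact ⟨w, (Finset.mem_filter.1 hw).1, hwC, hsw.subset (hnbr w hwC)⟩
  exact absurd (hS huS hwS huw) hnadj

end

section

variable {V : Type} {G : SimpleGraph V}

theorem IsChordal.not_isChordless {v : V} (hG : G.IsChordal) {c : G.Walk v v} (hc : c.IsCycle)
    (hlen : 4 ≤ c.length) : ¬ c.IsChordless := by
  intro hch
  refine hG c.length hlen ⟨⟨⟨fun i => c.getVert i, ?_⟩, ?_⟩⟩
  · intro i j h
    exact Fin.ext ((hc.getVert_inj i.2 j.2).1 h)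
  · intro i j
    change G.Adj (c.getVert i) (c.getVert j) ↔ _
    rw [hc.adj_getVert_iff_of_isChordless hch i.2 j.2, cycleGraph_adj_iff_val (by omega)]

theorem IsChordal.adj_of_reachableIn_of_reachableIn (hG : G.IsChordal) {C D : Set V}
    (hCD : ∀ a ∈ C, ∀ b ∈ D, a ≠ b ∧ ¬ G.Adj a b) {x y : V} (hxy : x ≠ y)
    (hC : G.ReachableIn (insert x (insert y C)) x y)
    (hD : G.ReachableIn (insert x (insert y D)) x y) : G.Adj x y := by
  by_contra hnadj
  obtain ⟨P, hP, hPc, hPC⟩ := hC.exists_isPath_isChordless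
  obtain ⟨Q, hQ, hQc, hQD⟩ := hD.exists_isPath_isChordless
  have hPQ : ∀ z ∈ P.support, z ∉ Q.support → z ∈ C := by
    intro z hz hzQ
    rcases hPC z hz with rfl | rfl | h
    exacts [absurd Q.start_mem_support hzQ, absurd Q.end_mem_support hzQ, h]
  have hQP : ∀ z ∈ Q.support, z ∉ P.support → z ∈ D := by
    intro z hz hzP
    rcases hQD z hz with rfl | rfl | h
    exacts [absurd P.start_mem_support hzP, absurd P.end_mem_support hzP, h]
  have hcycle : (P.append Q.reverse).IsCycle := by
    refine hP.isCycle_append hQ.reverse ?_ (Or.inl (P.two_le_length_of_not_adj hxy hnadj))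
    intro z hzP hzQ
    have hPx := hP.support_nodup
    have hQy := hQ.reverse.support_nodup
    rw [← Walk.cons_tail_support, List.nodup_cons] at hPx hQy
    have hzP' := List.mem_of_mem_tail hzP
    have hzQ' : z ∈ Q.support := by simpa using List.mem_of_mem_tail hzQ
    rcases hPC z hzP' with rfl | rfl | hzC
    · exact hPx.1 hzP
    · exact hQy.1 hzQ
    rcases hQD z hzQ' with rfl | rfl | hzD
    · exact hPx.1 hzP
    · exact hQy.1 hzQ
    exact (hCD z hzC z hzD).1 rfl
  refine hG.not_isChordless hcycle ?_ ?_
  · have := P.two_le_length_of_not_adj hxy hnadj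
    have := Q.two_le_length_of_not_adj hxy hnadj
    simp only [Walk.length_append, Walk.length_reverse]
    omega
  rw [Walk.isChordless_iff_forall_mem_edges]
  intro a b ha hb hab
  rw [Walk.mem_support_append_iff, Walk.support_reverse, List.mem_reverse] at ha hb
  rw [Walk.edges_append, Walk.edges_reverse, List.mem_append, List.mem_reverse]
  by_cases hPP : a ∈ P.support ∧ b ∈ P.support
  · exact Or.inl (hPc.mem_edges hPP.1 hPP.2 hab)
  by_cases hQQ : a ∈ Q.support ∧ b ∈ Q.support
  · exact Or.inr (hQc.mem_edges hQQ.1 hQQ.2 hab)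
  exfalso
  rcases ha with ha | ha <;> rcases hb with hb | hb
  · exact hPP ⟨ha, hb⟩
  · exact (hCD a (hPQ a ha fun h => hQQ ⟨h, hb⟩) b (hQP b hb fun h => hPP ⟨ha, h⟩)).2 hab
  · exact (hCD b (hPQ b hb fun h => hQQ ⟨ha, h⟩) a (hQP a ha fun h => hPP ⟨h, hb⟩)).2
      hab.symm
  · exact hQQ ⟨ha, hb⟩

theorem IsChordal.exists_isClique_separator (hG : G.IsChordal) (s : Finset V) {a b : V}
    (ha : a ∈ s) (hb : b ∈ s) (hab : a ≠ b) (hnadj : ¬ G.Adj a b) :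
    ∃ A B S : Set V, a ∈ A ∧ b ∈ B ∧ a ∉ S ∧ b ∉ S ∧ G.IsClique S ∧
      (∀ u ∈ A, ∀ v ∈ B, u ≠ v ∧ ¬ G.Adj u v) ∧
      (∀ u ∈ A, ∀ w ∈ s, G.Adj u w → w ∈ A ∨ w ∈ S) ∧
      (∀ v ∈ B, ∀ w ∈ s, G.Adj v w → w ∈ B ∨ w ∈ S) := by
  set W : Set V := {v | v ∈ s ∧ v ≠ b ∧ ¬ G.Adj b v}
  set A := G.componentIn W a
  set S : Set V := {w | w ∈ s ∧ w ∉ A ∧ ∃ u ∈ A, G.Adj u w}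
  set B := G.componentIn {v | v ∈ s ∧ v ∉ S} b
  have haW : a ∈ W := ⟨ha, hab, fun h => hnadj h.symm⟩
  have hAW : A ⊆ W := componentIn_subset
  have hAclosed : ∀ u ∈ A, ∀ w ∈ s, G.Adj u w → w ∈ A ∨ w ∈ S :=
    fun u hu w hw huw => or_iff_not_imp_left.2 fun hwA => ⟨hw, hwA, u, hu, huw⟩
  have hBclosed : ∀ v ∈ B, ∀ w ∈ s, G.Adj v w → w ∈ B ∨ w ∈ S :=
    fun v hv w hw hvw => or_iff_not_imp_right.2 fun hwS => ReachableIn.concat hv hvw ⟨hw, hwS⟩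
  have hSb : ∀ w ∈ S, G.Adj b w := by
    rintro w ⟨hws, hwA, u, hu, huw⟩
    by_contra hbw
    have hwb : w ≠ b := by
      rintro rfl
      exact (hAW hu).2.2 huw.symm
    exact hwA (ReachableIn.concat hu huw ⟨hws, hwb, hbw⟩)
  have hbS : b ∉ S := fun h => G.irrefl (hSb b h)
  have haS : a ∉ S := fun h => h.2.1 (.refl haW)
  have hBA : ∀ v ∈ B, v ∉ A := fun v hv hvA =>
    (hAW (ReachableIn.mem_of_forall_adj
      (fun u hu w hw huw => (hAclosed u hu w hw.1 huw).resolve_right hw.2)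
      (ReachableIn.symm hv) hvA)).2.1 rfl
  have hAB : ∀ u ∈ A, ∀ v ∈ B, u ≠ v ∧ ¬ G.Adj u v := by
    intro u hu v hv
    refine ⟨fun h => hBA v hv (h ▸ hu), fun huv => ?_⟩
    rcases hAclosed u hu v (ReachableIn.mem_right hv).1 huv with h | h
    exacts [hBA v hv h, (ReachableIn.mem_right hv).2 h]
  have hbB : b ∈ B := .refl ⟨hb, hbS⟩
  refine ⟨A, B, S, .refl haW, hbB, haS, hbS, ?_, hAB, hAclosed, hBclosed⟩
  intro x hx y hy hxy
  refine hG.adj_of_reachableIn_of_reachableIn hAB hxy ?_ ?_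
  · obtain ⟨-, -, u, hu, hux⟩ := hx
    obtain ⟨-, -, v, hv, hvy⟩ := hy
    exact (reachableIn_componentIn_of_mem hu hv).insert_insert hux.symm hvy
  · exact (ReachableIn.refl hbB).insert_insert (hSb x hx).symm (hSb y hy)

theorem IsChordal.exists_isSimplicialIn_pair (hG : G.IsChordal) (s : Finset V)
    (hs : ¬ G.IsClique (s : Set V)) : ∃ u ∈ s, ∃ w ∈ s,
      u ≠ w ∧ ¬ G.Adj u w ∧ G.IsSimplicialIn s u ∧ G.IsSimplicialIn s w := by
  induction s using Finset.strongInduction with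
  | H s ih =>
  obtain ⟨a, ha, b, hb, hab, hnadj⟩ : ∃ a ∈ s, ∃ b ∈ s, a ≠ b ∧ ¬ G.Adj a b := by
    simpa [IsClique, Set.Pairwise] using hs
  obtain ⟨A, B, S, haA, hbB, haS, hbS, hS, hAB, hA, hB⟩ :=
    hG.exists_isClique_separator s ha hb hab hnadj
  obtain ⟨u, hus, huA, hu⟩ := exists_isSimplicialIn_of_forall_ssubset ih hS hA haA ha hb
    (fun h => (hAB b h b hbB).1 rfl) hbS
  obtain ⟨w, hws, hwB, hw⟩ := exists_isSimplicialIn_of_forall_ssubset ih hS hB hbB hb ha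
    (fun h => (hAB a haA a h).1 rfl) haS
  exact ⟨u, hus, w, hws, (hAB u huA w hwB).1, (hAB u huA w hwB).2, hu, hw⟩

theorem IsChordal.exists_isSimplicialIn (hG : G.IsChordal) {s : Finset V} (hs : s.Nonempty) :
    ∃ v ∈ s, G.IsSimplicialIn s v := by
  by_cases hcl : G.IsClique (s : Set V)
  · obtain ⟨v, hv⟩ := hs
    exact ⟨v, hv, hcl.subset Set.inter_subset_right⟩
  · obtain ⟨u, hu, -, -, -, -, hsu, -⟩ := hG.exists_isSimplicialIn_pair s hcl
    exact ⟨u, hu, hsu⟩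

theorem IsChordal.exists_forall_adj_ne {α : Type*} [Fintype α] [Nonempty α] (hG : G.IsChordal)
    (hcl : G.CliqueFree (Fintype.card α + 1)) (s : Finset V) :
    ∃ f : V → α, ∀ u ∈ s, ∀ v ∈ s, G.Adj u v → f u ≠ f v := by
  classical
  induction s using Finset.strongInduction with
  | H s ih =>
  rcases s.eq_empty_or_nonempty with rfl | hs
  · exact ⟨fun _ => Classical.arbitrary α, by simp⟩
  obtain ⟨v, hv, hsimp⟩ := hG.exists_isSimplicialIn hs
  obtain ⟨f, hf⟩ := ih (s.erase v) (Finset.erase_ssubset hv)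
  set N := s.filter (G.Adj v)
  have hN : N.card < Fintype.card α := by
    have hK : G.IsClique (insert v N : Finset V) := by
      rw [Finset.coe_insert, isClique_insert]
      refine ⟨hsimp.subset fun w hw => ?_, fun w hw _ => (Finset.mem_filter.1 hw).2⟩
      exact ⟨(Finset.mem_filter.1 hw).2, (Finset.mem_filter.1 hw).1⟩
    have := lt_of_not_ge fun h => hcl.mono h _ ⟨hK, rfl⟩
    rw [Finset.card_insert_of_notMem (by simp [N])] at this
    omega
  obtain ⟨c, -, hc⟩ := Finset.exists_mem_notMem_of_card_lt_card (s := N.image f)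
    (t := Finset.univ) (by rw [Finset.card_univ]; exact Finset.card_image_le.trans_lt hN)
  have hcN : ∀ w ∈ s, G.Adj v w → c ≠ f w :=
    fun w hw hvw h => hc (Finset.mem_image.2 ⟨w, Finset.mem_filter.2 ⟨hw, hvw⟩, h.symm⟩)
  refine ⟨Function.update f v c, fun x hx y hy hxy => ?_⟩
  rcases eq_or_ne x v with rfl | hxv
  · rw [Function.update_self, Function.update_of_ne hxy.ne.symm]
    exact hcN y hy hxy
  rcases eq_or_ne y v with rfl | hyv
  · rw [Function.update_self, Function.update_of_ne hxv]
    exact (hcN x hx hxy.symm).symm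
  rw [Function.update_of_ne hxv, Function.update_of_ne hyv]
  exact hf x (Finset.mem_erase.2 ⟨hxv, hx⟩) y (Finset.mem_erase.2 ⟨hyv, hy⟩) hxy

end

end SimpleGraph

theorem stmt19 {V : Type} [Fintype V] (G : SimpleGraph V)
    (hchordal : G.IsChordal) (p : ℕ) (hp : 1 < p) :
    (¬ ∃ s : Finset V, G.IsNClique p s) ↔ G.Colorable (p - 1) := by
  constructor
  · intro h
    have : NeZero (p - 1) := ⟨by omega⟩
    have hcl : G.CliqueFree (Fintype.card (Fin (p - 1)) + 1) := by
      rw [Fintype.card_fin, Nat.sub_add_cancel hp.le]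
      exact fun s hs => h ⟨s, hs⟩
    obtain ⟨f, hf⟩ := hchordal.exists_forall_adj_ne hcl Finset.univ
    exact ⟨SimpleGraph.Coloring.mk f fun huv =>
      hf _ (Finset.mem_univ _) _ (Finset.mem_univ _) huv⟩
  · rintro hc ⟨s, hs⟩
    exact hc.cliqueFree (by omega) s hs
end
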